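/- Let H be a graph on k ≥ 2 vertices and let G be a graph on n ≥ k vertices with I(H,G) = I(H,n). For a vertex u of G, let H^u denote the number of k-element vertex subsets S of G with u ∈ S and G[S] isomorphic to H. Then for all vertices u, v of G, |H^u − H^v| ≤ C(n−2, k−2). -/

import Mathlib

open SimpleGraph

/-- Number of vertex subsets of `G` whose induced subgraph is isomorphic to `H`. -/
noncomputable def inducedCount {α β : Type*} [Fintype α] [Fintype β]
    (H : SimpleGraph α) (G : SimpleGraph β) : ℕ :=
  Set.ncard {S : Finset β | Nonempty (H ≃g (G.induce (S : Set β)))}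

/-- Maximum of `inducedCount H G` over all graphs `G` on `n` vertices. -/
noncomputable def maxCount {α : Type*} [Fintype α] (H : SimpleGraph α) (n : ℕ) : ℕ :=
  sSup {m | ∃ G : SimpleGraph (Fin n), inducedCount H G = m}

/-- The net graph: a triangle on `{3,4,5}` with pendant vertices `0,1,2`
attached to `3,4,5` respectively (0-indexed version of vertices 1..6). -/
def netGraph : SimpleGraph (Fin 6) :=
  SimpleGraph.fromRel (fun a b =>
    (a = 3 ∧ b = 4) ∨ (a = 4 ∧ b = 5) ∨ (a = 3 ∧ b = 5) ∨
    (a = 0 ∧ b = 3) ∨ (a = 1 ∧ b = 4) ∨ (a = 2 ∧ b = 5))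

/-- `N(n)`: the maximum number of induced copies of the net among graphs on `n` vertices. -/
noncomputable def netMax (n : ℕ) : ℕ := maxCount netGraph n

/-!
If `G` maximizes the number of induced copies of `H`, then replacing `v` by a non-adjacent twin
of `u` cannot increase that number. The copies avoiding `v` survive unchanged, and the swap of `u`
and `v`, an automorphism of the new graph, turns each copy through `u` avoiding `v` into a copy
through `v`. Hence the copies through `u` but not `v` are at most as many as the copies through
`v`, while the copies through both are `k`-sets containing `{u, v}`: at most `C(n-2, k-2)` of them.
-/

namespace SimpleGraph

variable {α V : Type*}

def inducedCopies (H : SimpleGraph α) (G : SimpleGraph V) : Set (Finset V) :=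
  {S | Nonempty (H ≃g G.induce (S : Set V))}

lemma card_eq_of_mem_inducedCopies [Fintype α] {H : SimpleGraph α} {G : SimpleGraph V}
    {S : Finset V} (hS : S ∈ inducedCopies H G) : S.card = Fintype.card α := by
  obtain ⟨e⟩ := hS
  simpa using (Fintype.card_congr e.toEquiv).symm

lemma inducedCount_le_maxCount {k n : ℕ} (H : SimpleGraph (Fin k)) (G : SimpleGraph (Fin n)) :
    inducedCount H G ≤ maxCount H n :=
  le_csSup ⟨Nat.card (Finset (Fin n)), by rintro _ ⟨G', rfl⟩; exact Set.ncard_le_card _⟩ ⟨G, rfl⟩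

lemma ncard_superset_card_eq_le [Fintype V] [DecidableEq V] (T : Finset V) (k : ℕ) :
    {S : Finset V | T ⊆ S ∧ S.card = k}.ncard
      ≤ (Fintype.card V - T.card).choose (k - T.card) := by
  calc {S : Finset V | T ⊆ S ∧ S.card = k}.ncard
      ≤ (((Tᶜ.powersetCard (k - T.card)).image (· ∪ T) : Finset (Finset V)) :
          Set (Finset V)).ncard := by
        refine Set.ncard_le_ncard ?_ (Set.toFinite _)
        rintro S ⟨hTS, rfl⟩
        rw [Finset.coe_image]
        refine ⟨S \ T, Finset.mem_powersetCard.2 ⟨fun x hx => Finset.mem_compl.2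
          (Finset.mem_sdiff.1 hx).2, Finset.card_sdiff_of_subset hTS⟩,
          Finset.sdiff_union_of_subset hTS⟩
    _ ≤ (Tᶜ.powersetCard (k - T.card)).card := by
        rw [Set.ncard_coe_finset]; exact Finset.card_image_le
    _ = _ := by rw [Finset.card_powersetCard, Finset.card_compl]

section replaceVertex

variable [DecidableEq V] (G : SimpleGraph V) (u v : V)

lemma induce_replaceVertex_of_notMem {s : Set V} (hv : v ∉ s) :
    (G.replaceVertex u v).induce s = G.induce s := by
  ext a b
  exact adj_replaceVertex_iff_of_ne G u (ne_of_mem_of_not_mem a.2 hv)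
    (ne_of_mem_of_not_mem b.2 hv)

lemma replaceVertex_adj_swap_iff {a b : V} :
    (G.replaceVertex u v).Adj (Equiv.swap u v a) (Equiv.swap u v b) ↔
      (G.replaceVertex u v).Adj a b := by
  simp only [replaceVertex, Equiv.swap_apply_def]
  split_ifs <;> simp_all [adj_comm]

def replaceVertexSwapIso : G.replaceVertex u v ≃g G.replaceVertex u v :=
  ⟨Equiv.swap u v, replaceVertex_adj_swap_iff G u v⟩

variable {G u v} {H : SimpleGraph α} {S : Finset V}

lemma mem_inducedCopies_replaceVertex_iff (hv : v ∉ S) :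
    S ∈ inducedCopies H (G.replaceVertex u v) ↔ S ∈ inducedCopies H G := by
  simp only [inducedCopies, Set.mem_ofPred_eq,
    induce_replaceVertex_of_notMem G u v (Finset.mem_coe.not.2 hv)]

lemma image_swap_mem_inducedCopies_replaceVertex
    (hS : S ∈ inducedCopies H (G.replaceVertex u v)) :
    S.image (Equiv.swap u v) ∈ inducedCopies H (G.replaceVertex u v) := by
  obtain ⟨e⟩ := hS
  refine ⟨e.trans ((replaceVertexSwapIso G u v).induce ?_)⟩
  rw [Finset.coe_image]
  exact (Equiv.swap u v).injective.injOn.bijOn_image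

lemma ncard_inducedCopies_mem_sdiff_le [Fintype α] [Fintype V]
    (hG : inducedCount H (G.replaceVertex u v) ≤ inducedCount H G) :
    ((inducedCopies H G ∩ {S | u ∈ S}) \ {S | v ∈ S}).ncard
      ≤ (inducedCopies H G ∩ {S | v ∈ S}).ncard := by
  set A := inducedCopies H G
  set A' := inducedCopies H (G.replaceVertex u v)
  have hswap : ((A ∩ {S | u ∈ S}) \ {S | v ∈ S}).ncard ≤ (A' ∩ {S | v ∈ S}).ncard := by
    refine Set.ncard_le_ncard_of_injOn (Finset.image (Equiv.swap u v)) ?_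
      (Finset.image_injective (Equiv.swap u v).injective).injOn
    rintro S ⟨⟨hSA, huS⟩, hvS⟩
    refine ⟨image_swap_mem_inducedCopies_replaceVertex
      ((mem_inducedCopies_replaceVertex_iff hvS).2 hSA), ?_⟩
    exact Finset.mem_image.2 ⟨u, huS, Equiv.swap_apply_left u v⟩
  have havoid : A' \ {S | v ∈ S} = A \ {S | v ∈ S} :=
    Set.ext fun S => and_congr_left mem_inducedCopies_replaceVertex_iff
  have hA := Set.ncard_inter_add_ncard_sdiff_eq_ncard A {S | v ∈ S}
  have hA' := Set.ncard_inter_add_ncard_sdiff_eq_ncard A' {S | v ∈ S}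
  rw [havoid] at hA'
  change A'.ncard ≤ A.ncard at hG
  omega

lemma ncard_inducedCopies_mem_le [Fintype α] [Fintype V] (huv : u ≠ v)
    (hG : inducedCount H (G.replaceVertex u v) ≤ inducedCount H G) :
    (inducedCopies H G ∩ {S | u ∈ S}).ncard
      ≤ (inducedCopies H G ∩ {S | v ∈ S}).ncard
        + (Fintype.card V - 2).choose (Fintype.card α - 2) := by
  have hboth : (inducedCopies H G ∩ {S | u ∈ S} ∩ {S | v ∈ S}).ncard
      ≤ (Fintype.card V - 2).choose (Fintype.card α - 2) := by
    rw [← Finset.card_pair huv]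
    refine (Set.ncard_le_ncard ?_ (Set.toFinite _)).trans
      (ncard_superset_card_eq_le {u, v} (Fintype.card α))
    rintro S ⟨⟨hSA, huS⟩, hvS⟩
    exact ⟨Finset.insert_subset huS (Finset.singleton_subset_iff.2 hvS),
      card_eq_of_mem_inducedCopies hSA⟩
  have hsplit := Set.ncard_inter_add_ncard_sdiff_eq_ncard
    (inducedCopies H G ∩ {S | u ∈ S}) {S | v ∈ S}
  have := ncard_inducedCopies_mem_sdiff_le hG
  omega

end replaceVertex

end SimpleGraph

theorem extremal_vertex_counts_close_general
    (k n : ℕ) (H : SimpleGraph (Fin k))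
    (G : SimpleGraph (Fin n)) (hG : inducedCount H G = maxCount H n)
    (u v : Fin n) :
    |(Set.ncard {S : Finset (Fin n) |
        u ∈ S ∧ Nonempty (H ≃g (G.induce (S : Set (Fin n))))} : ℤ) -
      (Set.ncard {S : Finset (Fin n) |
        v ∈ S ∧ Nonempty (H ≃g (G.induce (S : Set (Fin n))))} : ℤ)|
      ≤ ((n - 2).choose (k - 2) : ℤ) := by
  have hcopies (x : Fin n) : {S : Finset (Fin n) |
      x ∈ S ∧ Nonempty (H ≃g (G.induce (S : Set (Fin n))))} = inducedCopies H G ∩ {S | x ∈ S} :=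
    Set.ext fun _ => and_comm
  have hclose {x y : Fin n} (hxy : x ≠ y) : (inducedCopies H G ∩ {S | x ∈ S}).ncard
      ≤ (inducedCopies H G ∩ {S | y ∈ S}).ncard + (n - 2).choose (k - 2) := by
    simpa using ncard_inducedCopies_mem_le hxy ((inducedCount_le_maxCount H _).trans hG.ge)
  rcases eq_or_ne u v with rfl | huv
  · simp
  · rw [hcopies, hcopies, abs_sub_le_iff]
    have := hclose huv
    have := hclose huv.symm
    constructor <;> omega

theorem extremal_vertex_counts_close
    (k n : ℕ) (hk : 2 ≤ k) (hn : k ≤ n) (H : SimpleGraph (Fin k))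
    (G : SimpleGraph (Fin n)) (hG : inducedCount H G = maxCount H n)
    (u v : Fin n) :
    |(Set.ncard {S : Finset (Fin n) |
        u ∈ S ∧ Nonempty (H ≃g (G.induce (S : Set (Fin n))))} : ℤ) -
      (Set.ncard {S : Finset (Fin n) |
        v ∈ S ∧ Nonempty (H ≃g (G.induce (S : Set (Fin n))))} : ℤ)|
      ≤ ((n - 2).choose (k - 2) : ℤ) :=
  extremal_vertex_counts_close_general k n H G hG u v
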